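/- arXiv:1903.10184 — 6 statements merged into one kernel-verified Lean document; each statement's English description precedes it below -/
import Mathlib

section
/- Let T > 0, σ > 0 and let d₀, d_T be nonzero real numbers. Let μ := |d₀/d_T| and λ := d₀²/(Tσ²), and let ν be the inverse Gaussian distribution IGau(μ, λ). Define g : (0,T) → ℝ by g(t) = t^{−3/2}(T − t)^{−1/2} exp(−d_T²/(2(T − t)σ²) − d₀²/(2tσ²)); then 0 < ∫₀^T g(t) dt < ∞, and the pushforward of ν under the map k ↦ T/(1/k + 1) = Tk/(k + 1) is the probability measure on (0, T) with Lebesgue density t ↦ g(t)/∫₀^T g(s) ds. -/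
/-!
Under `t = T k / (k + 1)` the density `g` becomes a constant multiple of
`k ^ (-3/2) * exp (-(a k + b / k))`, which is also the shape of the inverse Gaussian density.
So the pushforward of `IGau(μ, λ)` is `c * g` on `(0, T)` for an explicit `c > 0`, and `c` must be
`1 / ∫ g` because `IGau(μ, λ)` is a probability measure. That its total mass is one follows from the
Cauchy–Schlömilch substitution `y = α √x - β / √x`, which reduces it to the Gaussian integral.
-/

open MeasureTheory Real

/-- The inverse Gaussian distribution `IGau(μ, λ)`: the measure on `(0,∞)` with
Lebesgue density `x ↦ √(λ/(2πx³)) · exp(−λ(x−μ)²/(2μ²x))`. -/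
noncomputable def invGaussian (μ lam : ℝ) : Measure ℝ :=
  (volume.restrict (Set.Ioi (0 : ℝ))).withDensity
    (fun x => ENNReal.ofReal
      (Real.sqrt (lam / (2 * π * x ^ 3)) * Real.exp (-lam * (x - μ) ^ 2 / (2 * μ ^ 2 * x))))

open Set
open scoped ENNReal

theorem map_withDensity_ofReal_abs_deriv_mul {s : Set ℝ} {f f' : ℝ → ℝ} (hs : MeasurableSet s)
    (hf' : ∀ x ∈ s, HasDerivWithinAt f (f' x) s x) (hf : InjOn f s) (hfm : Measurable f)
    (ρ : ℝ → ℝ≥0∞) :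
    Measure.map f ((volume.restrict s).withDensity fun x => ENNReal.ofReal |f' x| * ρ (f x)) =
      (volume.restrict (f '' s)).withDensity ρ := by
  ext t ht
  rw [Measure.map_apply hfm ht, withDensity_apply _ (hfm ht), withDensity_apply _ ht,
    Measure.restrict_restrict (hfm ht), Measure.restrict_restrict ht, ← image_preimage_inter,
    lintegral_image_eq_lintegral_abs_deriv_mul ((hfm ht).inter hs)
      (fun x hx => (hf' x hx.2).mono inter_subset_right) (hf.mono inter_subset_right)]

theorem integrable_and_integral_eq_inv_of_isProbabilityMeasure_withDensity {α : Type*}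
    [MeasurableSpace α] {μ : Measure α} {ρ : α → ℝ} {c : ℝ} (hc : 0 < c) (hρ : 0 ≤ᵐ[μ] ρ)
    (hρm : AEStronglyMeasurable ρ μ)
    [hprob : IsProbabilityMeasure (μ.withDensity fun x => ENNReal.ofReal (c * ρ x))] :
    Integrable ρ μ ∧ ∫ x, ρ x ∂μ = c⁻¹ := by
  have hcρ : 0 ≤ᵐ[μ] fun x => c * ρ x := hρ.mono fun x hx => mul_nonneg hc.le hx
  have hcρm : AEStronglyMeasurable (fun x => c * ρ x) μ := hρm.const_mul c
  have h := hprob.measure_univ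
  rw [withDensity_apply _ MeasurableSet.univ, Measure.restrict_univ] at h
  have hint : Integrable (fun x => c * ρ x) μ :=
    ⟨hcρm, (hasFiniteIntegral_iff_ofReal hcρ).2 (h ▸ ENNReal.one_lt_top)⟩
  refine ⟨(integrable_const_mul_iff hc.ne'.isUnit ρ).1 hint, eq_inv_of_mul_eq_one_right ?_⟩
  rw [← integral_const_mul, integral_eq_lintegral_of_nonneg_ae hcρ hcρm, h, ENNReal.toReal_one]

theorem lintegral_Ioi_comp_const_div {γ : ℝ} (hγ : 0 < γ) (F : ℝ → ℝ≥0∞) :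
    ∫⁻ x in Ioi 0, ENNReal.ofReal (γ / x ^ 2) * F (γ / x) = ∫⁻ x in Ioi 0, F x := by
  have hinv : ∀ x ∈ Ioi (0 : ℝ), γ / (γ / x) = x := fun x _ => div_div_cancel₀ hγ.ne'
  have himage : (γ / ·) '' Ioi (0 : ℝ) = Ioi 0 :=
    (image_subset_iff.2 fun x hx => div_pos hγ hx).antisymm
      fun x hx => ⟨γ / x, div_pos hγ hx, hinv x hx⟩
  have hinj : InjOn (γ / ·) (Ioi (0 : ℝ)) := fun x hx y hy hxy => by
    rw [← hinv x hx, ← hinv y hy]; exact congrArg (γ / ·) hxy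
  have hderiv : ∀ x ∈ Ioi (0 : ℝ), HasDerivWithinAt (γ / ·) (-(γ / x ^ 2)) (Ioi 0) x :=
    fun x hx => by
      simpa [div_eq_mul_inv] using ((hasDerivAt_inv (ne_of_gt hx)).const_mul γ).hasDerivWithinAt
  conv_rhs => rw [← himage, lintegral_image_eq_lintegral_abs_deriv_mul measurableSet_Ioi hderiv hinj]
  refine setLIntegral_congr_fun measurableSet_Ioi fun x hx => ?_
  rw [abs_neg, abs_of_pos (div_pos hγ (pow_pos hx 2))]

section SqrtSubDivSqrt

variable {α β : ℝ}

theorem hasDerivAt_mul_sqrt_sub_div_sqrt {x : ℝ} (hx : 0 < x) :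
    HasDerivAt (fun x => α * √x - β / √x) (α / (2 * √x) + β / (2 * (x * √x))) x := by
  have hsqrt := Real.hasDerivAt_sqrt hx.ne'
  have h := (hsqrt.const_mul α).sub ((hsqrt.inv (Real.sqrt_pos.2 hx).ne').const_mul β)
  simp only [div_eq_mul_inv β]
  refine h.congr_deriv ?_
  rw [Real.sq_sqrt hx.le]
  field_simp
  ring

theorem strictMonoOn_mul_sqrt_sub_div_sqrt (hα : 0 < α) (hβ : 0 ≤ β) :
    StrictMonoOn (fun x => α * √x - β / √x) (Ioi 0) := by
  intro x hx y _ hxy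
  have hsx : 0 < √x := Real.sqrt_pos.2 hx
  have hsxy : √x < √y := Real.sqrt_lt_sqrt hx.le hxy
  have : β / √y ≤ β / √x := div_le_div_of_nonneg_left hβ hsx hsxy.le
  have : α * √x < α * √y := mul_lt_mul_of_pos_left hsxy hα
  simp only
  linarith

theorem image_mul_sqrt_sub_div_sqrt (hα : 0 < α) (hβ : 0 < β) :
    (fun x => α * √x - β / √x) '' Ioi 0 = univ := by
  refine eq_univ_of_forall fun y => ?_
  -- `√x` is the positive root `r` of `α r ^ 2 - y r - β = 0`
  set D := √(y ^ 2 + 4 * α * β)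
  have hD : D ^ 2 = y ^ 2 + 4 * α * β := Real.sq_sqrt (by positivity)
  have hyD : -D < y := (abs_lt_of_sq_lt_sq' (by nlinarith) (Real.sqrt_nonneg _)).1
  set r := (y + D) / (2 * α) with hr_def
  have hr : 0 < r := div_pos (by linarith) (by positivity)
  have hroot : α * r ^ 2 - y * r - β = 0 := by
    rw [hr_def]
    field_simp
    linear_combination hD
  refine ⟨r ^ 2, mem_Ioi.2 (by positivity), ?_⟩
  simp only [Real.sqrt_sq hr.le]
  field_simp
  linear_combination hroot

-- the inversion `x ↦ (β / α) ^ 2 / x` turns `α * √x - β / √x` into its negative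
theorem lintegral_Ioi_comp_mul_sqrt_sub_div_sqrt_weight_swap (hα : 0 < α) (hβ : 0 < β)
    {f : ℝ → ℝ≥0∞} (hf_even : ∀ y, f (-y) = f y) :
    ∫⁻ x in Ioi 0, ENNReal.ofReal (α / √x) * f (α * √x - β / √x) =
      ∫⁻ x in Ioi 0, ENNReal.ofReal (β / (x * √x)) * f (α * √x - β / √x) := by
  rw [← lintegral_Ioi_comp_const_div (γ := (β / α) ^ 2) (by positivity)]
  refine setLIntegral_congr_fun measurableSet_Ioi fun x (hx : 0 < x) => ?_
  have hsx := Real.sqrt_pos.2 hx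
  have hsqrt : √((β / α) ^ 2 / x) = β / α / √x := by
    rw [Real.sqrt_div' _ hx.le, Real.sqrt_sq (by positivity)]
  have hneg : α * (β / α / √x) - β / (β / α / √x) = -(α * √x - β / √x) := by
    field_simp
    ring
  rw [hsqrt, hneg, hf_even, ← mul_assoc, ← ENNReal.ofReal_mul (by positivity)]
  congr 2
  field_simp
  exact Real.sq_sqrt hx.le

theorem lintegral_Ioi_comp_mul_sqrt_sub_div_sqrt (hα : 0 < α) (hβ : 0 < β) {f : ℝ → ℝ≥0∞}
    (hf : Measurable f) (hf_even : ∀ y, f (-y) = f y) :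
    ∫⁻ x in Ioi 0, ENNReal.ofReal (β / (x * √x)) * f (α * √x - β / √x) = ∫⁻ y, f y := by
  have hchange : ∫⁻ y, f y = ∫⁻ x in Ioi 0,
      ENNReal.ofReal (α / (2 * √x) + β / (2 * (x * √x))) * f (α * √x - β / √x) := by
    rw [← setLIntegral_univ, ← image_mul_sqrt_sub_div_sqrt hα hβ,
      lintegral_image_eq_lintegral_abs_deriv_mul measurableSet_Ioi
        (fun x hx => (hasDerivAt_mul_sqrt_sub_div_sqrt hx).hasDerivWithinAt)
        (strictMonoOn_mul_sqrt_sub_div_sqrt hα hβ.le).injOn]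
    refine setLIntegral_congr_fun measurableSet_Ioi fun x (hx : 0 < x) => ?_
    have := Real.sqrt_pos.2 hx
    rw [abs_of_pos (by positivity)]
  have htwice : 2 * ∫⁻ x in Ioi 0, ENNReal.ofReal (β / (x * √x)) * f (α * √x - β / √x) =
      2 * ∫⁻ y, f y := calc
    _ = ∫⁻ x in Ioi 0, (ENNReal.ofReal (α / √x) * f (α * √x - β / √x) +
          ENNReal.ofReal (β / (x * √x)) * f (α * √x - β / √x)) := by
        rw [lintegral_add_left (by fun_prop), two_mul,
          lintegral_Ioi_comp_mul_sqrt_sub_div_sqrt_weight_swap hα hβ hf_even]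
    _ = ∫⁻ x in Ioi 0, 2 * (ENNReal.ofReal (α / (2 * √x) + β / (2 * (x * √x))) *
          f (α * √x - β / √x)) := by
        refine setLIntegral_congr_fun measurableSet_Ioi fun x (hx : 0 < x) => ?_
        have := Real.sqrt_pos.2 hx
        rw [← add_mul, ← mul_assoc, ← ENNReal.ofReal_add (by positivity) (by positivity),
          ← ENNReal.ofReal_ofNat 2, ← ENNReal.ofReal_mul zero_le_two]
        congr 2
        field_simp
    _ = 2 * ∫⁻ y, f y := by rw [lintegral_const_mul _ (by fun_prop), hchange]
  exact (ENNReal.mul_right_inj two_ne_zero ENNReal.ofNat_ne_top).1 htwice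

end SqrtSubDivSqrt

theorem rpow_neg_three_halves {x : ℝ} (hx : 0 ≤ x) : x ^ (-(3 : ℝ) / 2) = (x * √x)⁻¹ := by
  rw [neg_div, Real.rpow_neg hx, show (3 : ℝ) / 2 = 1 + 1 / 2 by norm_num,
    Real.rpow_add' hx (by norm_num), Real.rpow_one, ← Real.sqrt_eq_rpow]

theorem lintegral_ofReal_exp_neg_sq : ∫⁻ y, ENNReal.ofReal (exp (-y ^ 2)) = ENNReal.ofReal √π := by
  rw [← ofReal_integral_eq_lintegral_ofReal (by simpa using integrable_exp_neg_mul_sq one_pos)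
    (ae_of_all _ fun _ => (exp_pos _).le)]
  simpa using congrArg ENNReal.ofReal (integral_gaussian 1)

theorem lintegral_Ioi_rpow_mul_exp_neg_mul_add_div {a b : ℝ} (ha : 0 < a) (hb : 0 < b) :
    ∫⁻ x in Ioi 0, ENNReal.ofReal (x ^ (-(3 : ℝ) / 2) * exp (-(a * x + b / x))) =
      ENNReal.ofReal (√(π / b) * exp (-(2 * √(a * b)))) := by
  have hsa := Real.sqrt_pos.2 ha
  have hsb := Real.sqrt_pos.2 hb
  have hpt : ∀ x : ℝ, 0 < x → x ^ (-(3 : ℝ) / 2) * exp (-(a * x + b / x)) =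
      exp (-(2 * √(a * b))) / √b * (√b / (x * √x) * exp (-(√a * √x - √b / √x) ^ 2)) := by
    intro x hx
    have hsx := Real.sqrt_pos.2 hx
    have hsq : (√a * √x - √b / √x) ^ 2 = a * x + b / x - 2 * √(a * b) := by
      rw [Real.sqrt_mul ha.le]
      field_simp
      rw [Real.sq_sqrt hx.le]
      linear_combination x ^ 3 * Real.sq_sqrt ha.le + x * Real.sq_sqrt hb.le
    rw [rpow_neg_three_halves hx.le, hsq, show -(a * x + b / x - 2 * √(a * b)) =
      2 * √(a * b) + -(a * x + b / x) by ring, exp_add, exp_neg (2 * √(a * b))]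
    field_simp
  calc ∫⁻ x in Ioi 0, ENNReal.ofReal (x ^ (-(3 : ℝ) / 2) * exp (-(a * x + b / x)))
      = ∫⁻ x in Ioi 0, ENNReal.ofReal (exp (-(2 * √(a * b))) / √b) *
          (ENNReal.ofReal (√b / (x * √x)) * ENNReal.ofReal (exp (-(√a * √x - √b / √x) ^ 2))) := by
        refine setLIntegral_congr_fun measurableSet_Ioi fun x (hx : 0 < x) => ?_
        have := Real.sqrt_pos.2 hx
        rw [hpt x hx, ENNReal.ofReal_mul (by positivity), ENNReal.ofReal_mul (by positivity)]
    _ = ENNReal.ofReal (exp (-(2 * √(a * b))) / √b) * ENNReal.ofReal √π := by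
        rw [lintegral_const_mul _ (by fun_prop), lintegral_Ioi_comp_mul_sqrt_sub_div_sqrt hsa hsb
          (f := fun y => ENNReal.ofReal (exp (-y ^ 2))) (by fun_prop) (fun y => by rw [neg_sq]),
          lintegral_ofReal_exp_neg_sq]
    _ = ENNReal.ofReal (√(π / b) * exp (-(2 * √(a * b)))) := by
        rw [← ENNReal.ofReal_mul (by positivity), Real.sqrt_div' _ hb.le]
        congr 1
        ring

theorem invGaussian_density_eq {μ lam x : ℝ} (hμ : μ ≠ 0) (hx : 0 < x) :
    √(lam / (2 * π * x ^ 3)) * exp (-lam * (x - μ) ^ 2 / (2 * μ ^ 2 * x)) =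
      √(lam / (2 * π)) * exp (lam / μ) *
        (x ^ (-(3 : ℝ) / 2) * exp (-(lam / (2 * μ ^ 2) * x + lam / 2 / x))) := by
  have hsqrt : √(x ^ 3) = x * √x := by
    rw [show x ^ 3 = x ^ 2 * x by ring, Real.sqrt_mul (by positivity), Real.sqrt_sq hx.le]
  have hexp : exp (-lam * (x - μ) ^ 2 / (2 * μ ^ 2 * x)) =
      exp (lam / μ) * exp (-(lam / (2 * μ ^ 2) * x + lam / 2 / x)) := by
    rw [← exp_add]
    congr 1
    field_simp
    ring
  rw [show lam / (2 * π * x ^ 3) = lam / (2 * π) / x ^ 3 by ring, Real.sqrt_div' _ (by positivity),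
    hsqrt, rpow_neg_three_halves hx.le, hexp]
  ring

theorem isProbabilityMeasure_invGaussian {μ lam : ℝ} (hμ : 0 < μ) (hlam : 0 < lam) :
    IsProbabilityMeasure (invGaussian μ lam) := by
  constructor
  rw [invGaussian, withDensity_apply _ MeasurableSet.univ, Measure.restrict_univ,
    setLIntegral_congr_fun measurableSet_Ioi fun x (hx : 0 < x) => by
      rw [invGaussian_density_eq hμ.ne' hx, ENNReal.ofReal_mul (by positivity)],
    lintegral_const_mul _ (by fun_prop),
    lintegral_Ioi_rpow_mul_exp_neg_mul_add_div (by positivity) (by positivity),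
    ← ENNReal.ofReal_mul (by positivity), ← ENNReal.ofReal_one]
  congr 1
  have hsqrt : √(lam / (2 * μ ^ 2) * (lam / 2)) = lam / (2 * μ) := by
    rw [show lam / (2 * μ ^ 2) * (lam / 2) = (lam / (2 * μ)) ^ 2 by ring, Real.sqrt_sq (by positivity)]
  rw [hsqrt, mul_mul_mul_comm, ← exp_add, ← Real.sqrt_mul (by positivity)]
  field_simp
  simp

noncomputable def firstPassageKernel (T A B t : ℝ) : ℝ :=
  t ^ (-(3 : ℝ) / 2) * (T - t) ^ (-(1 : ℝ) / 2) * exp (-A / (T - t) - B / t)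

theorem firstPassageKernel_nonneg {T A B t : ℝ} (ht : t ∈ Ioo 0 T) :
    0 ≤ firstPassageKernel T A B t := by
  have := Real.rpow_nonneg (sub_nonneg.2 ht.2.le) (-(1 : ℝ) / 2)
  have := ht.1
  unfold firstPassageKernel
  positivity

section MulDivAddOne

variable {T : ℝ}

theorem hasDerivAt_mul_div_add_one {k : ℝ} (hk : k + 1 ≠ 0) :
    HasDerivAt (fun k => T * k / (k + 1)) (T / (k + 1) ^ 2) k := by
  refine (((hasDerivAt_id k).const_mul T).div ((hasDerivAt_id k).add_const 1) hk).congr_deriv ?_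
  simp only [id]
  field_simp
  ring

theorem injOn_mul_div_add_one (hT : T ≠ 0) : InjOn (fun k => T * k / (k + 1)) (Ioi 0) := by
  intro x (hx : 0 < x) y (hy : 0 < y) hxy
  simp only at hxy
  field_simp at hxy
  linarith

theorem image_mul_div_add_one_Ioi (hT : 0 < T) :
    (fun k => T * k / (k + 1)) '' Ioi 0 = Ioo 0 T := by
  ext t
  simp only [mem_image, mem_Ioi, mem_Ioo]
  constructor
  · rintro ⟨k, hk, rfl⟩
    exact ⟨by positivity, by rw [div_lt_iff₀ (by positivity)]; linarith⟩
  · rintro ⟨ht0, htT⟩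
    refine ⟨t / (T - t), div_pos ht0 (by linarith), ?_⟩
    have : T - t ≠ 0 := by linarith
    field_simp
    ring

theorem firstPassageKernel_comp_mul_div_add_one (hT : 0 < T) {k : ℝ} (hk : 0 < k) (A B : ℝ) :
    T / (k + 1) ^ 2 * firstPassageKernel T A B (T * k / (k + 1)) =
      exp (-(A + B) / T) / T * (k ^ (-(3 : ℝ) / 2) * exp (-(A / T * k + B / T / k))) := by
  set c := T / (k + 1) with hc_def
  have hc : 0 < c := by positivity
  rw [firstPassageKernel, show T * k / (k + 1) = c * k by ring,
    show T - c * k = c by rw [hc_def]; field_simp; ring, Real.mul_rpow hc.le hk.le]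
  have hprefactor : T / (k + 1) ^ 2 * (c ^ (-(3 : ℝ) / 2) * c ^ (-(1 : ℝ) / 2)) = 1 / T := by
    rw [← Real.rpow_add hc, show -(3 : ℝ) / 2 + -(1 : ℝ) / 2 = -(2 : ℕ) by norm_num,
      Real.rpow_neg hc.le, Real.rpow_natCast, hc_def]
    field_simp
  have hexp : exp (-A / c - B / (c * k)) = exp (-(A + B) / T) * exp (-(A / T * k + B / T / k)) := by
    rw [← exp_add, hc_def]
    congr 1
    field_simp
    ring
  rw [hexp]
  linear_combination (k ^ (-(3 : ℝ) / 2) * exp (-(A + B) / T) * exp (-(A / T * k + B / T / k)))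
    * hprefactor

theorem map_invGaussian_mul_div_add_one (hT : 0 < T) {μ lam : ℝ} (hμ : μ ≠ 0) :
    Measure.map (fun k => T * k / (k + 1)) (invGaussian μ lam) =
      (volume.restrict (Ioo 0 T)).withDensity fun t => ENNReal.ofReal
        (T * √(lam / (2 * π)) * exp (lam / μ + lam / (2 * μ ^ 2) + lam / 2) *
          firstPassageKernel T (T * lam / (2 * μ ^ 2)) (T * lam / 2) t) := by
  rw [← image_mul_div_add_one_Ioi hT, ← map_withDensity_ofReal_abs_deriv_mul measurableSet_Ioi
    (fun k (hk : 0 < k) => (hasDerivAt_mul_div_add_one (by positivity)).hasDerivWithinAt)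
    (injOn_mul_div_add_one hT.ne') (by fun_prop), invGaussian]
  refine congrArg _ (withDensity_congr_ae ((ae_restrict_iff' measurableSet_Ioi).2
    (ae_of_all _ fun k (hk : 0 < k) => ?_)))
  dsimp only
  rw [← ENNReal.ofReal_mul (abs_nonneg _), abs_of_pos (by positivity), mul_left_comm,
    firstPassageKernel_comp_mul_div_add_one hT hk, invGaussian_density_eq hμ hk]
  have hA : T * lam / (2 * μ ^ 2) / T = lam / (2 * μ ^ 2) := by field_simp
  have hB : T * lam / 2 / T = lam / 2 := by field_simp
  have hAB : -(T * lam / (2 * μ ^ 2) + T * lam / 2) / T = -(lam / (2 * μ ^ 2) + lam / 2) := by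
    field_simp
  congr 1
  rw [hA, hB, hAB, add_assoc, exp_add, Real.exp_neg (lam / (2 * μ ^ 2) + lam / 2)]
  field_simp

end MulDivAddOne

theorem first_passage_time_density_as_transformed_inverse_gaussian
    (T σ d0 dT : ℝ) (hT : 0 < T) (hσ : 0 < σ) (hd0 : d0 ≠ 0) (hdT : dT ≠ 0)
    (g : ℝ → ℝ)
    (hg : ∀ t, g t = t ^ (-(3 : ℝ) / 2) * (T - t) ^ (-(1 : ℝ) / 2) *
      Real.exp (-dT ^ 2 / (2 * (T - t) * σ ^ 2) - d0 ^ 2 / (2 * t * σ ^ 2))) :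
    (0 < ∫ t in Set.Ioo (0 : ℝ) T, g t) ∧
    IntegrableOn g (Set.Ioo (0 : ℝ) T) ∧
    Measure.map (fun k => T * k / (k + 1))
        (invGaussian |d0 / dT| (d0 ^ 2 / (T * σ ^ 2))) =
      (volume.restrict (Set.Ioo (0 : ℝ) T)).withDensity
        (fun t => ENNReal.ofReal (g t / ∫ s in Set.Ioo (0 : ℝ) T, g s)) := by
  set μ := |d0 / dT|
  set lam := d0 ^ 2 / (T * σ ^ 2)
  have hμ : 0 < μ := abs_pos.2 (div_ne_zero hd0 hdT)
  have hg_kernel : g = firstPassageKernel T (T * lam / (2 * μ ^ 2)) (T * lam / 2) := by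
    have hA : T * lam / (2 * μ ^ 2) = dT ^ 2 / (2 * σ ^ 2) := by
      simp only [μ, lam, div_pow, sq_abs]
      field_simp
    have hB : T * lam / 2 = d0 ^ 2 / (2 * σ ^ 2) := by
      simp only [lam]
      field_simp
    funext t
    rw [hg, firstPassageKernel, hA, hB]
    congr 2
    generalize T - t = s
    ring
  have hmap := map_invGaussian_mul_div_add_one hT (lam := lam) hμ.ne'
  rw [← hg_kernel] at hmap
  set c := T * √(lam / (2 * π)) * exp (lam / μ + lam / (2 * μ ^ 2) + lam / 2)
  have hc : 0 < c := by positivity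
  have := isProbabilityMeasure_invGaussian hμ (by positivity : 0 < lam)
  have : IsProbabilityMeasure ((volume.restrict (Ioo 0 T)).withDensity
      fun t => ENNReal.ofReal (c * g t)) :=
    hmap ▸ Measure.isProbabilityMeasure_map (by fun_prop)
  obtain ⟨hint, hintegral⟩ := integrable_and_integral_eq_inv_of_isProbabilityMeasure_withDensity
    (μ := volume.restrict (Ioo 0 T)) hc
    ((ae_restrict_iff' measurableSet_Ioo).2 (ae_of_all _ fun t ht =>
      hg_kernel ▸ firstPassageKernel_nonneg ht))
    (by rw [hg_kernel]; unfold firstPassageKernel; fun_prop)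
  refine ⟨hintegral ▸ inv_pos.2 hc, hint, ?_⟩
  simp_rw [hmap, hintegral, div_inv_eq_mul, mul_comm c]
end

section
/- Let a, b > 0 and let ν be the inverse Gaussian distribution IGau(√(b/a), 2b). Then the pushforward of ν under the map x ↦ 1/x is the probability measure on (0, ∞) with Lebesgue density v ↦ C · v^{−1/2} exp(−a/v − b·v), where C = (∫₀^∞ w^{−1/2} exp(−a/w − b·w) dw)^{−1} is the normalizing constant (and this integral is finite and positive). -/
open MeasureTheory Real

/-!
Under `v = 1/x` the inverse Gaussian density becomes a constant multiple of
`v^(-1/2) exp(-a/v - b v)`, so everything reduces to computing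
`∫₀^∞ v^(-1/2) exp(-a/v - b v) dv = √(π/b) exp(-2√(ab))`.
After `v = t²` this is `2 exp(-2√(ab)) ∫₀^∞ exp(-(√b t - √a/t)²) dt`, and the
Cauchy–Schlömilch substitution `u = d t - c/t` turns `∫₀^∞ g(d t - c/t) dt` into
`(2d)⁻¹ ∫_ℝ g` for even `g`: the Jacobian `d + c/t²` splits into `d` and `c/t²`, and the
reflection `t ↦ c/(d t)`, which maps `d t - c/t` to its negative, shows both parts
contribute equally. Computing with lower integrals makes integrability a by-product.
-/

open Set
open scoped ENNReal

theorem lintegral_Ioi_eq_lintegral_comp_sq (F : ℝ → ℝ≥0∞) :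
    ∫⁻ v in Ioi 0, F v = ∫⁻ t in Ioi 0, ENNReal.ofReal (2 * t) * F (t ^ 2) := by
  have himage : (fun t : ℝ => t ^ 2) '' Ioi 0 = Ioi 0 :=
    Subset.antisymm (image_subset_iff.2 fun t (ht : 0 < t) => pow_pos ht 2)
      fun v (hv : 0 < v) => ⟨√v, sqrt_pos.2 hv, sq_sqrt hv.le⟩
  have hderiv : ∀ t ∈ Ioi (0 : ℝ), HasDerivWithinAt (fun t => t ^ 2) (2 * t) (Ioi 0) t :=
    fun t _ => by simpa using (hasDerivAt_pow 2 t).hasDerivWithinAt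
  conv_lhs => rw [← himage, lintegral_image_eq_lintegral_abs_deriv_mul measurableSet_Ioi hderiv
    ((pow_left_strictMonoOn₀ two_ne_zero).mono fun t (ht : 0 < t) => ht.le).injOn]
  refine setLIntegral_congr_fun measurableSet_Ioi fun t (ht : 0 < t) => ?_
  rw [abs_of_pos (by positivity)]

theorem lintegral_Ioi_eq_lintegral_comp_div {k : ℝ} (hk : 0 < k) (F : ℝ → ℝ≥0∞) :
    ∫⁻ t in Ioi 0, F t = ∫⁻ s in Ioi 0, ENNReal.ofReal (k / s ^ 2) * F (k / s) := by
  have himage : (fun s => k / s) '' Ioi 0 = Ioi 0 :=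
    Subset.antisymm (image_subset_iff.2 fun s (hs : 0 < s) => div_pos hk hs)
      fun t (ht : 0 < t) => ⟨k / t, div_pos hk ht, div_div_cancel₀ hk.ne'⟩
  have hderiv : ∀ s ∈ Ioi (0 : ℝ), HasDerivWithinAt (fun s => k / s) (-(k / s ^ 2)) (Ioi 0) s :=
    fun s hs => by
      simpa [div_eq_mul_inv] using ((hasDerivAt_inv (ne_of_gt hs)).const_mul k).hasDerivWithinAt
  conv_lhs => rw [← himage, lintegral_image_eq_lintegral_abs_deriv_mul measurableSet_Ioi hderiv
    fun x _ y _ e => by rwa [div_eq_div_iff_comm, div_left_inj' hk.ne'] at e]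
  refine setLIntegral_congr_fun measurableSet_Ioi fun s (hs : 0 < s) => ?_
  rw [abs_neg, abs_of_pos (by positivity)]

theorem map_inv_withDensity_Ioi (f : ℝ → ℝ≥0∞) :
    Measure.map (fun x => x⁻¹) ((volume.restrict (Ioi 0)).withDensity f) =
      (volume.restrict (Ioi 0)).withDensity fun v => ENNReal.ofReal (v ^ 2)⁻¹ * f v⁻¹ := by
  ext A hA
  have hA' : MeasurableSet (A ∩ Ioi 0) := hA.inter measurableSet_Ioi
  have hpre : (fun x : ℝ => x⁻¹) ⁻¹' A ∩ Ioi 0 = (fun v : ℝ => v⁻¹) '' (A ∩ Ioi 0) := by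
    ext x
    simp
  rw [Measure.map_apply measurable_inv hA, withDensity_apply _ (measurable_inv hA),
    withDensity_apply _ hA, Measure.restrict_restrict (measurable_inv hA),
    Measure.restrict_restrict hA, hpre,
    lintegral_image_eq_lintegral_abs_deriv_mul hA'
      (fun v hv => (hasDerivAt_inv (ne_of_gt hv.2)).hasDerivWithinAt)
      (fun x _ y _ e => inv_injective e)]
  refine setLIntegral_congr_fun hA' fun v _ => ?_
  rw [abs_neg, abs_inv, abs_of_nonneg (sq_nonneg v)]

theorem hasDerivAt_mul_sub_div {c d t : ℝ} (ht : t ≠ 0) :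
    HasDerivAt (fun t => d * t - c / t) (d + c / t ^ 2) t := by
  refine (((hasDerivAt_id' t).const_mul d).sub
    ((hasDerivAt_const t c).div (hasDerivAt_id' t) ht)).congr_deriv ?_
  ring

section CauchySchlomilch

variable {c d : ℝ} (hc : 0 < c) (hd : 0 < d)
include hc hd

theorem image_mul_sub_div_Ioi : (fun t => d * t - c / t) '' Ioi 0 = univ := by
  refine eq_univ_of_forall fun u => ?_
  obtain ⟨s, hs, hs2⟩ : ∃ s, 0 ≤ s ∧ s ^ 2 = u ^ 2 + 4 * c * d :=
    ⟨_, sqrt_nonneg _, sq_sqrt (by positivity)⟩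
  have hus : 0 < u + s := by nlinarith [mul_pos hc hd]
  refine ⟨(u + s) / (2 * d), div_pos hus (by positivity), ?_⟩
  field_simp
  linear_combination hs2

theorem injOn_mul_sub_div_Ioi : InjOn (fun t => d * t - c / t) (Ioi 0) := by
  refine StrictMonoOn.injOn fun x (hx : 0 < x) y _ hxy => ?_
  have : c / y < c / x := div_lt_div_of_pos_left hc hx hxy
  show d * x - c / x < d * y - c / y
  nlinarith

theorem lintegral_comp_mul_sub_div_Ioi {g : ℝ → ℝ≥0∞} (hg : Measurable g)
    (hg_even : ∀ u, g (-u) = g u) :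
    ∫⁻ t in Ioi 0, g (d * t - c / t) = ENNReal.ofReal (2 * d)⁻¹ * ∫⁻ u, g u := by
  set G := fun t => g (d * t - c / t)
  have hG : Measurable G := hg.comp (by fun_prop)
  have hsubst : ∫⁻ u, g u = ∫⁻ t in Ioi 0, ENNReal.ofReal (d + c / t ^ 2) * G t := by
    rw [← setLIntegral_univ, ← image_mul_sub_div_Ioi hc hd,
      lintegral_image_eq_lintegral_abs_deriv_mul measurableSet_Ioi
        (fun t ht => (hasDerivAt_mul_sub_div (ne_of_gt ht)).hasDerivWithinAt)
        (injOn_mul_sub_div_Ioi hc hd)]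
    refine setLIntegral_congr_fun measurableSet_Ioi fun t (ht : 0 < t) => ?_
    rw [abs_of_pos (by positivity)]
  have hsplit : ∫⁻ t in Ioi 0, ENNReal.ofReal (d + c / t ^ 2) * G t =
      (∫⁻ t in Ioi 0, ENNReal.ofReal d * G t) + ∫⁻ t in Ioi 0, ENNReal.ofReal (c / t ^ 2) * G t := by
    rw [← lintegral_add_left (hG.const_mul _)]
    refine setLIntegral_congr_fun measurableSet_Ioi fun t _ => ?_
    rw [ENNReal.ofReal_add hd.le (by positivity), add_mul]
  have hreflect : ∫⁻ t in Ioi 0, ENNReal.ofReal (c / t ^ 2) * G t =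
      ∫⁻ t in Ioi 0, ENNReal.ofReal d * G t := by
    rw [lintegral_Ioi_eq_lintegral_comp_div (div_pos hc hd)]
    refine setLIntegral_congr_fun measurableSet_Ioi fun s (hs : 0 < s) => ?_
    have hG_reflect : G (c / d / s) = G s := by
      show g _ = g _
      rw [← hg_even (d * s - c / s)]
      congr 1
      field_simp
      ring
    rw [hG_reflect, ← mul_assoc, ← ENNReal.ofReal_mul (by positivity)]
    congr 2
    field_simp
  have htwice : ∫⁻ u, g u = ENNReal.ofReal (2 * d) * ∫⁻ t in Ioi 0, G t := by
    rw [hsubst, hsplit, hreflect, ← two_mul, lintegral_const_mul' _ _ ENNReal.ofReal_ne_top,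
      ← mul_assoc, ENNReal.ofReal_mul zero_le_two, ENNReal.ofReal_ofNat]
  rw [htwice, ← mul_assoc, ← ENNReal.ofReal_mul (by positivity), inv_mul_cancel₀ (by positivity),
    ENNReal.ofReal_one, one_mul]

end CauchySchlomilch

theorem lintegral_exp_neg_sq : ∫⁻ u, ENNReal.ofReal (exp (-u ^ 2)) = ENNReal.ofReal √π := by
  rw [← ofReal_integral_eq_lintegral_ofReal (by simpa using integrable_exp_neg_mul_sq one_pos)
    (Filter.Eventually.of_forall fun u => (exp_pos _).le)]
  simpa using congrArg ENNReal.ofReal (integral_gaussian 1)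

theorem exp_neg_div_sq_sub_mul_sq {a b t : ℝ} (ha : 0 ≤ a) (hb : 0 ≤ b) (ht : t ≠ 0) :
    exp (-a / t ^ 2 - b * t ^ 2) = exp (-(2 * √(a * b))) * exp (-(√b * t - √a / t) ^ 2) := by
  rw [← exp_add, sqrt_mul ha]
  congr 1
  field_simp
  linear_combination sq_sqrt ha + t ^ 4 * sq_sqrt hb

theorem rpow_neg_one_half_eq_inv_sqrt {x : ℝ} (hx : 0 ≤ x) : x ^ (-(1 : ℝ) / 2) = (√x)⁻¹ := by
  rw [sqrt_eq_rpow, ← rpow_neg hx]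
  norm_num

section Integral

variable {a b : ℝ} (ha : 0 < a) (hb : 0 < b)
include ha hb

theorem lintegral_rpow_neg_one_half_mul_exp_neg_div_sub_mul :
    ∫⁻ v in Ioi 0, ENNReal.ofReal (v ^ (-(1 : ℝ) / 2) * exp (-a / v - b * v)) =
      ENNReal.ofReal (√(π / b) * exp (-(2 * √(a * b)))) := by
  have hpt : ∀ t ∈ Ioi (0 : ℝ), ENNReal.ofReal (2 * t) *
      ENNReal.ofReal ((t ^ 2) ^ (-(1 : ℝ) / 2) * exp (-a / t ^ 2 - b * t ^ 2)) =
      ENNReal.ofReal (2 * exp (-(2 * √(a * b)))) *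
        ENNReal.ofReal (exp (-(√b * t - √a / t) ^ 2)) := fun t (ht : 0 < t) => by
    rw [← ENNReal.ofReal_mul (by positivity), ← ENNReal.ofReal_mul (by positivity),
      rpow_neg_one_half_eq_inv_sqrt (by positivity), sqrt_sq ht.le,
      exp_neg_div_sq_sub_mul_sq ha.le hb.le ht.ne']
    field_simp
  rw [lintegral_Ioi_eq_lintegral_comp_sq, setLIntegral_congr_fun measurableSet_Ioi hpt,
    lintegral_const_mul' _ _ ENNReal.ofReal_ne_top,
    lintegral_comp_mul_sub_div_Ioi (g := fun u => ENNReal.ofReal (exp (-u ^ 2)))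
      (sqrt_pos.2 ha) (sqrt_pos.2 hb) (by fun_prop) (fun u => by rw [neg_sq]),
    lintegral_exp_neg_sq, ← ENNReal.ofReal_mul (by positivity),
    ← ENNReal.ofReal_mul (by positivity)]
  congr 1
  rw [sqrt_div' _ hb.le]
  field_simp

theorem integrableOn_rpow_neg_one_half_mul_exp_neg_div_sub_mul :
    IntegrableOn (fun v : ℝ => v ^ (-(1 : ℝ) / 2) * exp (-a / v - b * v)) (Ioi 0) := by
  refine ⟨by fun_prop, (hasFiniteIntegral_iff_ofReal ?_).2 ?_⟩
  · exact (ae_restrict_mem measurableSet_Ioi).mono fun v (hv : 0 < v) => by positivity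
  · rw [lintegral_rpow_neg_one_half_mul_exp_neg_div_sub_mul ha hb]
    exact ENNReal.ofReal_lt_top

theorem integral_rpow_neg_one_half_mul_exp_neg_div_sub_mul :
    ∫ v in Ioi 0, v ^ (-(1 : ℝ) / 2) * exp (-a / v - b * v) = √(π / b) * exp (-(2 * √(a * b))) := by
  rw [integral_eq_lintegral_of_nonneg_ae
    ((ae_restrict_mem measurableSet_Ioi).mono fun v (hv : 0 < v) => by positivity) (by fun_prop),
    lintegral_rpow_neg_one_half_mul_exp_neg_div_sub_mul ha hb, ENNReal.toReal_ofReal (by positivity)]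

theorem inv_sq_mul_invGaussian_density_inv {v : ℝ} (hv : 0 < v) :
    (v ^ 2)⁻¹ * (√(2 * b / (2 * π * v⁻¹ ^ 3)) *
        exp (-(2 * b) * (v⁻¹ - √(b / a)) ^ 2 / (2 * √(b / a) ^ 2 * v⁻¹))) =
      (√(π / b) * exp (-(2 * √(a * b))))⁻¹ * (v ^ (-(1 : ℝ) / 2) * exp (-a / v - b * v)) := by
  obtain ⟨s, hs, rfl⟩ : ∃ s, 0 < s ∧ v = s ^ 2 := ⟨√v, sqrt_pos.2 hv, (sq_sqrt hv.le).symm⟩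
  have hμ : a * √(b / a) ^ 2 = b := by
    rw [sq_sqrt (by positivity)]
    field_simp
  have haμ : a * √(b / a) = √(a * b) := by
    rw [← sqrt_sq ha.le, ← sqrt_mul (sq_nonneg a), sqrt_sq ha.le]
    field_simp
  have hexp : -(2 * b) * ((s ^ 2)⁻¹ - √(b / a)) ^ 2 / (2 * √(b / a) ^ 2 * (s ^ 2)⁻¹) =
      2 * √(a * b) + (-a / s ^ 2 - b * s ^ 2) := by
    rw [← haμ]
    field_simp
    linear_combination (1 - 2 * s ^ 2 * √(b / a)) * hμ
  have hsqrt : √(2 * b / (2 * π * ((s ^ 2)⁻¹) ^ 3)) = √(b / π) * s ^ 3 := by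
    rw [show 2 * b / (2 * π * ((s ^ 2)⁻¹) ^ 3) = b / π * (s ^ 3) ^ 2 by field_simp,
      sqrt_mul (by positivity), sqrt_sq (by positivity)]
  rw [hexp, hsqrt, exp_add, exp_neg, rpow_neg_one_half_eq_inv_sqrt (by positivity),
    sqrt_sq hs.le, sqrt_div' _ hb.le, sqrt_div' _ pi_pos.le]
  field_simp

end Integral

theorem reciprocal_of_inverse_gaussian_density
    (a b : ℝ) (ha : 0 < a) (hb : 0 < b)
    (h : ℝ → ℝ) (hh : ∀ v, h v = v ^ (-(1 : ℝ) / 2) * Real.exp (-a / v - b * v)) :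
    (0 < ∫ w in Set.Ioi (0 : ℝ), h w) ∧
    IntegrableOn h (Set.Ioi (0 : ℝ)) ∧
    Measure.map (fun x => 1 / x) (invGaussian (Real.sqrt (b / a)) (2 * b)) =
      (volume.restrict (Set.Ioi (0 : ℝ))).withDensity
        (fun v => ENNReal.ofReal ((∫ w in Set.Ioi (0 : ℝ), h w)⁻¹ * h v)) := by
  obtain rfl : h = fun v => v ^ (-(1 : ℝ) / 2) * exp (-a / v - b * v) := funext hh
  rw [integral_rpow_neg_one_half_mul_exp_neg_div_sub_mul ha hb]
  refine ⟨by positivity, integrableOn_rpow_neg_one_half_mul_exp_neg_div_sub_mul ha hb, ?_⟩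
  simp only [one_div]
  rw [invGaussian, map_inv_withDensity_Ioi]
  refine withDensity_congr_ae ((ae_restrict_mem measurableSet_Ioi).mono fun v (hv : 0 < v) => ?_)
  dsimp only
  rw [← ENNReal.ofReal_mul (by positivity), inv_sq_mul_invGaussian_density_inv ha hb hv]
end

section
/- Let Υ ∈ {1, 2}, x ≥ 0, and N ∈ ℕ. Then ∑_{n=N+1}^{∞} n · ∑_{m=0}^{∞} x^{2m + 3n/Υ} / (m! · Γ(m + 3n/Υ + 1)) ≤ (x^{3N/Υ + 3/Υ} / (N+1)!) · exp(x^{3/Υ} + x²). -/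
open Real

/-- Lower bound on Gamma: for `β ≥ 3/2` and `n ≥ 1`,
`Γ(m + βn + 1) ≥ n * n! * m!`. -/
lemma gam_lb {β : ℝ} (hβ : (3:ℝ)/2 ≤ β) (m n : ℕ) (hn : 1 ≤ n) :
    ((n * (Nat.factorial n * Nat.factorial m) : ℕ) : ℝ) ≤
      Real.Gamma ((m : ℝ) + β * n + 1) := by
  have hmono := Real.Gamma_strictMonoOn_Ici.monotoneOn
  have hm0 : (0:ℝ) ≤ (m : ℝ) := Nat.cast_nonneg m
  rcases eq_or_lt_of_le hn with h1 | h2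
  · -- n = 1
    have hn1 : n = 1 := h1.symm
    subst hn1
    rw [Nat.cast_one]
    have key : Real.Gamma (((m + 1 : ℕ) : ℝ) + 1) ≤ Real.Gamma ((m : ℝ) + β * 1 + 1) := by
      apply hmono
      · simp only [Set.mem_Ici]; push_cast; linarith
      · simp only [Set.mem_Ici]; linarith
      · push_cast; linarith
    rw [Real.Gamma_nat_eq_factorial] at key
    refine le_trans ?_ key
    exact_mod_cast Nat.le_of_dvd (Nat.factorial_pos _)
      (by simpa using Nat.factorial_dvd_factorial (Nat.le_succ m))
  · -- n ≥ 2
    have h2' : 2 ≤ n := h2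
    have hn2 : (2:ℝ) ≤ (n : ℝ) := by exact_mod_cast h2'
    have key : Real.Gamma (((m + n + 1 : ℕ) : ℝ) + 1) ≤ Real.Gamma ((m : ℝ) + β * n + 1) := by
      apply hmono
      · simp only [Set.mem_Ici]; push_cast; linarith
      · simp only [Set.mem_Ici]; nlinarith
      · push_cast; nlinarith
    rw [Real.Gamma_nat_eq_factorial] at key
    refine le_trans ?_ key
    have hnat : n * (Nat.factorial n * Nat.factorial m) ≤ Nat.factorial (m + n + 1) := by
      calc n * (Nat.factorial n * Nat.factorial m)
          ≤ (n+1) * (Nat.factorial n * Nat.factorial m) := by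
            exact Nat.mul_le_mul_right _ (Nat.le_succ n)
        _ = Nat.factorial (n+1) * Nat.factorial m := by
            rw [Nat.factorial_succ]; ring
        _ ≤ Nat.factorial ((n+1) + m) :=
            Nat.le_of_dvd (Nat.factorial_pos _)
              (Nat.factorial_mul_factorial_dvd_factorial_add _ _)
        _ = Nat.factorial (m + n + 1) := by ring_nf
    exact_mod_cast hnat

theorem remainder_bound_R2
    (Υ : ℕ) (hΥ : Υ = 1 ∨ Υ = 2) (x : ℝ) (hx : 0 ≤ x) (N : ℕ) :
    (∑' n : ℕ, ((N + 1 + n : ℕ) : ℝ) *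
        ∑' m : ℕ, x ^ (2 * (m : ℝ) + 3 * ((N + 1 + n : ℕ) : ℝ) / (Υ : ℝ)) /
          ((Nat.factorial m : ℝ) *
            Real.Gamma ((m : ℝ) + 3 * ((N + 1 + n : ℕ) : ℝ) / (Υ : ℝ) + 1))) ≤
      x ^ (3 * (N : ℝ) / (Υ : ℝ) + 3 / (Υ : ℝ)) / (Nat.factorial (N + 1) : ℝ) *
        Real.exp (x ^ ((3 : ℝ) / (Υ : ℝ)) + x ^ 2) := by
  set β : ℝ := 3 / (Υ : ℝ) with hβdef
  have hβ : (3:ℝ)/2 ≤ β := by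
    rcases hΥ with h | h <;> simp [hβdef, h] <;> norm_num
  have hβ0 : (0:ℝ) ≤ β := le_trans (by norm_num) hβ
  have hexp : ∀ c : ℝ, 3 * c / (Υ : ℝ) = β * c := fun c => by rw [hβdef]; ring
  simp only [hexp]
  set XB : ℝ := x ^ β with hXB
  have hXBnn : (0:ℝ) ≤ XB := Real.rpow_nonneg hx β
  have hx2nn : (0:ℝ) ≤ x ^ 2 := sq_nonneg x
  -- exponential series
  have hexp_tsum : ∀ y : ℝ, ∑' m : ℕ, y ^ m / (Nat.factorial m : ℝ) = Real.exp y := by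
    intro y
    rw [Real.exp_eq_exp_ℝ, NormedSpace.exp_eq_tsum_div]
  -- abbreviations
  set f : ℕ → ℕ → ℝ := fun n m =>
    x ^ (2 * (m : ℝ) + β * ((n : ℕ) : ℝ)) /
      ((Nat.factorial m : ℝ) * Real.Gamma ((m : ℝ) + β * ((n : ℕ) : ℝ) + 1)) with hf
  set u : ℕ → ℝ := fun k => XB ^ (N + 1 + k) /
      ((Nat.factorial (N + 1) : ℝ) * (Nat.factorial k : ℝ)) with hu
  set v : ℕ → ℝ := fun m => (x ^ 2) ^ m / (Nat.factorial m : ℝ) with hv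
  have hfnn : ∀ n m, 0 ≤ f n m := by
    intro n m
    apply div_nonneg (Real.rpow_nonneg hx _)
    apply mul_nonneg (Nat.cast_nonneg _)
    apply Real.Gamma_nonneg_of_nonneg
    positivity
  have hvnn : ∀ m, 0 ≤ v m := fun m => by positivity
  have hunn : ∀ k, 0 ≤ u k := fun k => by positivity
  have hvsum : Summable v := Real.summable_pow_div_factorial (x ^ 2)
  have husum : Summable u := by
    have : u = fun k => (XB ^ (N + 1) / (Nat.factorial (N + 1) : ℝ)) *
        (XB ^ k / (Nat.factorial k : ℝ)) := by
      funext k; simp only [hu, pow_add]; ring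
    rw [this]
    exact (Real.summable_pow_div_factorial XB).mul_left _
  -- key termwise bound
  have key : ∀ k m : ℕ, ((N + 1 + k : ℕ) : ℝ) * f (N + 1 + k) m ≤ u k * v m := by
    intro k m
    set n : ℕ := N + 1 + k with hn
    have hA : x ^ (2 * (m : ℝ) + β * ((n : ℕ) : ℝ)) = XB ^ n * (x ^ 2) ^ m := by
      have e1 : x ^ (2 * (m : ℝ)) = (x ^ 2) ^ m := by
        rw [show (2 * (m : ℝ)) = (((2 * m : ℕ) : ℝ)) by push_cast; ring,
          Real.rpow_natCast, pow_mul]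
      have e2 : x ^ (β * ((n : ℕ) : ℝ)) = XB ^ n := by
        rw [Real.rpow_mul hx, Real.rpow_natCast]
      rw [Real.rpow_add_of_nonneg hx (by positivity) (by positivity), e1, e2]
      ring
    have hΓ := gam_lb hβ m n (by omega)
    have hΓpos : 0 < Real.Gamma ((m : ℝ) + β * n + 1) := by
      refine lt_of_lt_of_le ?_ hΓ
      exact_mod_cast Nat.mul_pos (by omega) (Nat.mul_pos (Nat.factorial_pos _) (Nat.factorial_pos _))
    have hfac : (Nat.factorial (N + 1) * Nat.factorial k : ℕ) ≤ Nat.factorial n :=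
      Nat.le_of_dvd (Nat.factorial_pos _) (Nat.factorial_mul_factorial_dvd_factorial_add _ _)
    have h1 : (n : ℝ) * (((Nat.factorial (N + 1) : ℝ) * (Nat.factorial k : ℝ)) * (Nat.factorial m : ℝ))
        ≤ (Nat.factorial m : ℝ) * Real.Gamma ((m : ℝ) + β * n + 1) := by
      have hm1 : (1:ℝ) ≤ (Nat.factorial m : ℝ) := by exact_mod_cast Nat.one_le_iff_ne_zero.mpr (Nat.factorial_ne_zero m)
      have c1 : ((n * (Nat.factorial (N + 1) * Nat.factorial k * Nat.factorial m) : ℕ) : ℝ)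
          ≤ ((n * (Nat.factorial n * Nat.factorial m) : ℕ) : ℝ) := by
        exact_mod_cast Nat.mul_le_mul_left n (Nat.mul_le_mul_right _ hfac)
      have c2 := le_trans c1 hΓ
      push_cast at c2
      nlinarith [Real.Gamma_nonneg_of_nonneg (show (0:ℝ) ≤ (m : ℝ) + β * n + 1 by positivity)]
    simp only [hf, hu, hv]
    rw [hA, div_mul_div_comm, ← mul_div_assoc,
      div_le_div_iff₀ (by positivity) (by positivity)]
    calc (n : ℝ) * (XB ^ n * (x ^ 2) ^ m) *
          ((Nat.factorial (N + 1) : ℝ) * (Nat.factorial k : ℝ) * (Nat.factorial m : ℝ))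
        = (XB ^ (N + 1 + k) * (x ^ 2) ^ m) *
          ((n : ℝ) * (((Nat.factorial (N + 1) : ℝ) * (Nat.factorial k : ℝ)) * (Nat.factorial m : ℝ))) := by
          rw [← hn]; ring
      _ ≤ (XB ^ (N + 1 + k) * (x ^ 2) ^ m) *
          ((Nat.factorial m : ℝ) * Real.Gamma ((m : ℝ) + β * n + 1)) := by
          apply mul_le_mul_of_nonneg_left h1 (by positivity)
  -- inner sums
  have hfsummable : ∀ k : ℕ, Summable (f (N + 1 + k)) := by
    intro k
    apply Summable.of_nonneg_of_le (fun m => hfnn _ m) (fun m => ?_) (hvsum.mul_left (u k))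
    calc f (N + 1 + k) m ≤ ((N + 1 + k : ℕ) : ℝ) * f (N + 1 + k) m := by
          nlinarith [hfnn (N + 1 + k) m, show (1:ℝ) ≤ ((N + 1 + k : ℕ) : ℝ) by exact_mod_cast Nat.succ_le_of_lt (by omega)]
      _ ≤ u k * v m := key k m
  have hvexp : ∑' m, v m = Real.exp (x ^ 2) := by
    simp only [hv]; exact hexp_tsum (x ^ 2)
  have inner : ∀ k : ℕ, ((N + 1 + k : ℕ) : ℝ) * ∑' m, f (N + 1 + k) m ≤ u k * Real.exp (x ^ 2) := by
    intro k
    calc ((N + 1 + k : ℕ) : ℝ) * ∑' m, f (N + 1 + k) m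
        = ∑' m, ((N + 1 + k : ℕ) : ℝ) * f (N + 1 + k) m := tsum_mul_left.symm
      _ ≤ ∑' m, u k * v m := Summable.tsum_le_tsum (key k) ((hfsummable k).mul_left _) (hvsum.mul_left (u k))
      _ = u k * ∑' m, v m := tsum_mul_left
      _ = u k * Real.exp (x ^ 2) := by rw [hvexp]
  -- outer sum
  have houter_nn : ∀ k : ℕ, 0 ≤ ((N + 1 + k : ℕ) : ℝ) * ∑' m, f (N + 1 + k) m := by
    intro k
    exact mul_nonneg (Nat.cast_nonneg _) (tsum_nonneg fun m => hfnn _ m)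
  have hS2 : Summable (fun k => u k * Real.exp (x ^ 2)) := husum.mul_right _
  have hS1 : Summable (fun k : ℕ => ((N + 1 + k : ℕ) : ℝ) * ∑' m, f (N + 1 + k) m) :=
    Summable.of_nonneg_of_le houter_nn inner hS2
  have step := Summable.tsum_le_tsum inner hS1 hS2
  have husumval : ∑' k, u k = XB ^ (N + 1) / (Nat.factorial (N + 1) : ℝ) * Real.exp XB := by
    have hrw : u = fun k => (XB ^ (N + 1) / (Nat.factorial (N + 1) : ℝ)) *
        (XB ^ k / (Nat.factorial k : ℝ)) := by
      funext k; simp only [hu, pow_add]; ring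
    rw [hrw, tsum_mul_left, hexp_tsum XB]
  have final : ∑' k, u k * Real.exp (x ^ 2)
      = XB ^ (N + 1) / (Nat.factorial (N + 1) : ℝ) * Real.exp (XB + x ^ 2) := by
    rw [tsum_mul_right, husumval, Real.exp_add]; ring
  refine le_trans step ?_
  rw [final]
  have hpow : x ^ (β * (N : ℝ) + β) = XB ^ (N + 1) := by
    rw [show β * (N : ℝ) + β = β * (((N + 1 : ℕ) : ℝ)) by push_cast; ring,
      Real.rpow_mul hx, Real.rpow_natCast]
  rw [hpow]
end

section
/- Let Υ ∈ {1, 2}, x ≥ 0, c ≥ 0, and let (s_n)_{n≥1} be a real sequence with |s_n| ≤ n for all n ≥ 1. For N, M ∈ ℕ define p̂^{(N,M)} := c · ∑_{n=1}^{N} s_n · ∑_{m=0}^{M} x^{2m + 3n/Υ} / (m! · Γ(m + 3n/Υ + 1)) and ε^{(N,M)} := c · ( x^{3N/Υ + 3/Υ}/(N+1)! + x^{2M + 2 + 3/Υ}/((M+1)!(M+2)!) ) · exp(x^{3/Υ} + x²). Then the double series p := c · ∑_{n=1}^{∞} s_n · ∑_{m=0}^{∞} x^{2m + 3n/Υ}/(m!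 · Γ(m + 3n/Υ + 1)) converges absolutely, |p − p̂^{(N,M)}| ≤ ε^{(N,M)} for all N ≥ 1 and M ∈ ℕ, and ε^{(N,M)} → 0 as both N → ∞ and M → ∞. -/
open Real Filter

private lemma ucas_fact_mul_fact_le (a b : ℕ) :
    a.factorial * b.factorial ≤ (a + b).factorial := by
  induction b with
  | zero => simp
  | succ b ih =>
    have h1 : a.factorial * (b + 1).factorial = (b + 1) * (a.factorial * b.factorial) := by
      rw [Nat.factorial_succ]; ring
    rw [h1]
    calc (b + 1) * (a.factorial * b.factorial) ≤ (b + 1) * (a + b).factorial :=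
          Nat.mul_le_mul_left _ ih
      _ ≤ (a + b + 1) * (a + b).factorial := Nat.mul_le_mul_right _ (by omega)
      _ = (a + b + 1).factorial := (Nat.factorial_succ _).symm

private lemma ucas_key2 (M : ℕ) : ∀ n : ℕ, 1 ≤ n →
    (M + 2).factorial * n.factorial ≤ (M + n + 1).factorial := by
  intro n hn
  induction n with
  | zero => omega
  | succ n ih =>
    rcases Nat.lt_or_ge n 1 with h | h
    · obtain rfl : n = 0 := by omega
      simp
    · calc (M + 2).factorial * (n + 1).factorial
          = (n + 1) * ((M + 2).factorial * n.factorial) := by rw [Nat.factorial_succ n]; ring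
        _ ≤ (n + 1) * (M + n + 1).factorial := Nat.mul_le_mul_left _ (ih h)
        _ ≤ (M + n + 2) * (M + n + 1).factorial := Nat.mul_le_mul_right _ (by omega)
        _ = (M + (n + 1) + 1).factorial := (Nat.factorial_succ (M + n + 1)).symm

private lemma ucas_gamma_mono {u v : ℝ} (hu : 2 ≤ u) (huv : u ≤ v) :
    Real.Gamma u ≤ Real.Gamma v :=
  Real.Gamma_strictMonoOn_Ici.monotoneOn (Set.mem_Ici.mpr hu)
    (Set.mem_Ici.mpr (hu.trans huv)) huv

private lemma ucas_gamma_fact {b : ℝ} (hb : 0 ≤ b) (m : ℕ) :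
    Real.Gamma (b + 1) * (m.factorial : ℝ) ≤ Real.Gamma ((m : ℝ) + b + 1) := by
  induction m with
  | zero => simp
  | succ m ih =>
    have hpos : (0 : ℝ) < (m : ℝ) + b + 1 := by positivity
    have h1 : Real.Gamma ((↑(m + 1) : ℝ) + b + 1) = ((m : ℝ) + b + 1) * Real.Gamma ((m : ℝ) + b + 1) := by
      rw [show (↑(m + 1) : ℝ) + b + 1 = ((m : ℝ) + b + 1) + 1 by push_cast; ring,
        Real.Gamma_add_one hpos.ne']
    have h2 : Real.Gamma (b + 1) * ((m + 1).factorial : ℝ)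
        = ((m : ℝ) + 1) * (Real.Gamma (b + 1) * (m.factorial : ℝ)) := by
      push_cast [Nat.factorial_succ]; ring
    rw [h1, h2]
    have hg0 : 0 ≤ Real.Gamma (b + 1) * (m.factorial : ℝ) := by
      have := Real.Gamma_pos_of_pos (show (0:ℝ) < b + 1 by linarith)
      positivity
    apply mul_le_mul (by linarith) ih hg0 (by linarith)

private lemma ucas_exp_tsum (y : ℝ) :
    ∑' m : ℕ, y ^ m / (m.factorial : ℝ) = Real.exp y := by
  rw [Real.exp_eq_exp_ℝ, NormedSpace.exp_eq_tsum_div]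

private lemma ucas_frac {p Y G D : ℝ} (hY : 0 ≤ Y) (hD : 0 < D) (hG : 0 < G)
    (h : p * D ≤ G) : p * (Y / G) ≤ Y / D := by
  rw [show p * (Y / G) = p * Y / G by ring, div_le_div_iff₀ hG hD]
  nlinarith

theorem unbiased_coin_approximation_scheme
    (Υ : ℕ) (hΥ : Υ = 1 ∨ Υ = 2) (x c : ℝ) (hx : 0 ≤ x) (hc : 0 ≤ c)
    (s : ℕ → ℝ) (hs : ∀ n : ℕ, 1 ≤ n → |s n| ≤ (n : ℝ))
    (f : ℕ → ℕ → ℝ)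
    (hf : ∀ n m : ℕ, f n m = x ^ (2 * (m : ℝ) + 3 * (n : ℝ) / (Υ : ℝ)) /
      ((Nat.factorial m : ℝ) * Real.Gamma ((m : ℝ) + 3 * (n : ℝ) / (Υ : ℝ) + 1)))
    (phat eps : ℕ → ℕ → ℝ)
    (hphat : ∀ N M : ℕ, phat N M =
      c * ∑ n ∈ Finset.Icc 1 N, s n * ∑ m ∈ Finset.range (M + 1), f n m)
    (heps : ∀ N M : ℕ, eps N M =
      c * (x ^ (3 * (N : ℝ) / (Υ : ℝ) + 3 / (Υ : ℝ)) / (Nat.factorial (N + 1) : ℝ) +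
           x ^ (2 * (M : ℝ) + 2 + 3 / (Υ : ℝ)) /
             ((Nat.factorial (M + 1) : ℝ) * (Nat.factorial (M + 2) : ℝ))) *
        Real.exp (x ^ ((3 : ℝ) / (Υ : ℝ)) + x ^ 2)) :
    (∀ n : ℕ, 1 ≤ n → Summable (fun m : ℕ => f n m)) ∧
    Summable (fun n : ℕ => |s (n + 1) * ∑' m : ℕ, f (n + 1) m|) ∧
    (∀ N M : ℕ, 1 ≤ N →
      |c * (∑' n : ℕ, s (n + 1) * ∑' m : ℕ, f (n + 1) m) - phat N M| ≤ eps N M) ∧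
    Tendsto (fun NM : ℕ × ℕ => eps NM.1 NM.2) atTop (nhds 0) := by
  set a : ℝ := 3 / (Υ : ℝ) with ha_def
  have ha1 : (1 : ℝ) ≤ a := by rcases hΥ with h | h <;> norm_num [ha_def, h]
  have ha32 : (3 : ℝ) / 2 ≤ a := by rcases hΥ with h | h <;> norm_num [ha_def, h]
  have ha0 : (0 : ℝ) ≤ a := by linarith
  have hXA0 : (0 : ℝ) ≤ x ^ a := Real.rpow_nonneg hx a
  have hX20 : (0 : ℝ) ≤ x ^ 2 := sq_nonneg x
  -- power splitting
  have hpowna : ∀ n : ℕ, x ^ ((n : ℝ) * a) = (x ^ a) ^ n := by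
    intro n; rw [mul_comm, Real.rpow_mul hx, Real.rpow_natCast]
  have hsplit : ∀ n m : ℕ, x ^ (2 * (m : ℝ) + (n : ℝ) * a) = (x ^ 2) ^ m * (x ^ a) ^ n := by
    intro n m
    rw [Real.rpow_add_of_nonneg hx (by positivity) (by positivity : (0:ℝ) ≤ (n : ℝ) * a),
      hpowna n]
    congr 1
    rw [show (2 : ℝ) * (m : ℝ) = ((2 * m : ℕ) : ℝ) by push_cast; ring,
      Real.rpow_natCast, pow_mul]
  have hf' : ∀ n m : ℕ, f n m = (x ^ 2) ^ m * (x ^ a) ^ n /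
      ((m.factorial : ℝ) * Real.Gamma ((m : ℝ) + (n : ℝ) * a + 1)) := by
    intro n m
    rw [hf n m,
      show 2 * (m : ℝ) + 3 * (n : ℝ) / (Υ : ℝ) = 2 * (m : ℝ) + (n : ℝ) * a by
        rw [ha_def]; ring,
      show (m : ℝ) + 3 * (n : ℝ) / (Υ : ℝ) + 1 = (m : ℝ) + (n : ℝ) * a + 1 by
        rw [ha_def]; ring,
      hsplit n m]
  have hargpos : ∀ n m : ℕ, (0 : ℝ) < (m : ℝ) + (n : ℝ) * a + 1 := by
    intro n m
    have h1 : (0 : ℝ) ≤ (n : ℝ) * a := mul_nonneg (Nat.cast_nonneg n) ha0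
    have h2 : (0 : ℝ) ≤ (m : ℝ) := Nat.cast_nonneg m
    linarith
  have hGpos : ∀ n m : ℕ, 0 < Real.Gamma ((m : ℝ) + (n : ℝ) * a + 1) :=
    fun n m => Real.Gamma_pos_of_pos (hargpos n m)
  have hGpos' : ∀ n : ℕ, 0 < Real.Gamma ((n : ℝ) * a + 1) := by
    intro n
    have := hGpos n 0
    simpa using this
  have hfnn : ∀ n m : ℕ, 0 ≤ f n m := by
    intro n m
    rw [hf' n m]
    exact div_nonneg (by positivity) (le_of_lt (mul_pos (by positivity) (hGpos n m)))
  -- pointwise bound on f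
  have hfle : ∀ n m : ℕ, f n m ≤
      (x ^ a) ^ n / Real.Gamma ((n : ℝ) * a + 1) * ((x ^ 2) ^ m / (m.factorial : ℝ)) := by
    intro n m
    rw [hf' n m, div_mul_div_comm]
    have hd2 : (0 : ℝ) < Real.Gamma ((n : ℝ) * a + 1) * (m.factorial : ℝ) :=
      mul_pos (hGpos' n) (by positivity)
    have hden : Real.Gamma ((n : ℝ) * a + 1) * (m.factorial : ℝ) ≤
        (m.factorial : ℝ) * Real.Gamma ((m : ℝ) + (n : ℝ) * a + 1) := by
      have h1 := ucas_gamma_fact (mul_nonneg (Nat.cast_nonneg n) ha0) m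
      have h2 : (1 : ℝ) ≤ (m.factorial : ℝ) := by exact_mod_cast Nat.one_le_iff_ne_zero.mpr m.factorial_ne_zero
      nlinarith [hGpos' n, (hGpos n m)]
    exact div_le_div₀ (by positivity) (le_of_eq (mul_comm _ _)) hd2 hden
  have hsummexp : ∀ y : ℝ, Summable (fun m : ℕ => y ^ m / (m.factorial : ℝ)) :=
    fun y => Real.summable_pow_div_factorial y
  have hSummF : ∀ n : ℕ, Summable (fun m : ℕ => f n m) := by
    intro n
    exact Summable.of_nonneg_of_le (hfnn n) (hfle n) ((hsummexp (x ^ 2)).mul_left _)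
  have hS_nonneg : ∀ n : ℕ, 0 ≤ ∑' m : ℕ, f n m := fun n => tsum_nonneg (hfnn n)
  have hS_le : ∀ n : ℕ, (∑' m : ℕ, f n m) ≤
      (x ^ a) ^ n / Real.Gamma ((n : ℝ) * a + 1) * Real.exp (x ^ 2) := by
    intro n
    calc (∑' m : ℕ, f n m)
        ≤ ∑' m : ℕ, (x ^ a) ^ n / Real.Gamma ((n : ℝ) * a + 1) * ((x ^ 2) ^ m / (m.factorial : ℝ)) :=
          Summable.tsum_le_tsum (hfle n) (hSummF n) ((hsummexp (x ^ 2)).mul_left _)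
      _ = (x ^ a) ^ n / Real.Gamma ((n : ℝ) * a + 1) * ∑' m : ℕ, (x ^ 2) ^ m / (m.factorial : ℝ) :=
          tsum_mul_left
      _ = _ := by rw [ucas_exp_tsum]
  -- Gamma vs factorial bounds
  have hG1 : ∀ n : ℕ, ((n.factorial : ℝ)) ≤ Real.Gamma ((n : ℝ) * a + 1) := by
    intro n
    rcases Nat.eq_zero_or_pos n with rfl | hn
    · norm_num [Real.Gamma_one]
    · have h1 : Real.Gamma ((n : ℝ) + 1) = (n.factorial : ℝ) := Real.Gamma_nat_eq_factorial n
      rw [← h1]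
      apply ucas_gamma_mono
      · have : (1 : ℝ) ≤ (n : ℝ) := by exact_mod_cast hn
        linarith
      · have h2 : (n : ℝ) * 1 ≤ (n : ℝ) * a :=
          mul_le_mul_of_nonneg_left ha1 (Nat.cast_nonneg n)
        linarith
  have hG2 : ∀ n : ℕ, 2 ≤ n → (((n + 1).factorial : ℝ)) ≤ Real.Gamma ((n : ℝ) * a + 1) := by
    intro n hn
    have h1 : Real.Gamma ((((n + 1) : ℕ) : ℝ) + 1) = ((n + 1).factorial : ℝ) :=
      Real.Gamma_nat_eq_factorial (n + 1)
    rw [← h1]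
    have hn' : (2 : ℝ) ≤ (n : ℝ) := by exact_mod_cast hn
    apply ucas_gamma_mono
    · push_cast; linarith
    · push_cast
      nlinarith
  -- Part 2 bound
  have hbound2 : ∀ n : ℕ, |s (n + 1) * ∑' m : ℕ, f (n + 1) m| ≤
      Real.exp (x ^ 2) * (x ^ a) * ((x ^ a) ^ n / (n.factorial : ℝ)) := by
    intro n
    rw [abs_mul, abs_of_nonneg (hS_nonneg (n + 1))]
    have h1 : |s (n + 1)| ≤ ((n + 1 : ℕ) : ℝ) := hs (n + 1) (by omega)
    have h2 := hS_le (n + 1)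
    have h3 : (x ^ a) ^ (n + 1) / Real.Gamma (((n + 1 : ℕ) : ℝ) * a + 1) ≤
        (x ^ a) ^ (n + 1) / (((n + 1).factorial : ℝ)) := by
      apply div_le_div_of_nonneg_left (by positivity) (by exact_mod_cast Nat.factorial_pos (n + 1)) (hG1 (n + 1))
    have h4 : |s (n + 1)| * (∑' m : ℕ, f (n + 1) m) ≤
        ((n + 1 : ℕ) : ℝ) * ((x ^ a) ^ (n + 1) / (((n + 1).factorial : ℝ)) * Real.exp (x ^ 2)) := by
      exact mul_le_mul h1 (h2.trans (mul_le_mul_of_nonneg_right h3 (Real.exp_nonneg _)))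
        (hS_nonneg _) (by positivity)
    refine h4.trans (le_of_eq ?_)
    have hfs : (((n + 1).factorial : ℝ)) = ((n + 1 : ℕ) : ℝ) * (n.factorial : ℝ) := by
      push_cast [Nat.factorial_succ]; ring
    have hnp : ((n + 1 : ℕ) : ℝ) ≠ 0 := by positivity
    rw [pow_succ, hfs]
    field_simp
  have hsummxa : Summable (fun n : ℕ => Real.exp (x ^ 2) * (x ^ a) * ((x ^ a) ^ n / (n.factorial : ℝ))) :=
    (hsummexp (x ^ a)).mul_left _
  have hpart2 : Summable (fun n : ℕ => |s (n + 1) * ∑' m : ℕ, f (n + 1) m|) :=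
    Summable.of_nonneg_of_le (fun n => abs_nonneg _) hbound2 hsummxa
  -- generic exponent rewrites
  have hAcgen : ∀ N : ℕ, x ^ (3 * (N : ℝ) / (Υ : ℝ) + a) = (x ^ a) ^ (N + 1) := by
    intro N
    rw [show 3 * (N : ℝ) / (Υ : ℝ) + a = (((N + 1 : ℕ)) : ℝ) * a by
      rw [ha_def]; push_cast; ring, hpowna]
  have hBcgen : ∀ M : ℕ, x ^ (2 * (M : ℝ) + 2 + a) = (x ^ 2) ^ (M + 1) * x ^ a := by
    intro M
    rw [show 2 * (M : ℝ) + 2 + a = 2 * (((M + 1 : ℕ)) : ℝ) + (((1 : ℕ)) : ℝ) * a by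
      push_cast; ring, hsplit 1 (M + 1), pow_one]
  -- Part 3
  have hpart3 : ∀ N M : ℕ, 1 ≤ N →
      |c * (∑' n : ℕ, s (n + 1) * ∑' m : ℕ, f (n + 1) m) - phat N M| ≤ eps N M := by
    intro N M hN
    have hsum2 : Summable (fun n : ℕ => s (n + 1) * ∑' m : ℕ, f (n + 1) m) := hpart2.of_abs
    have hSummTail : ∀ n : ℕ, Summable (fun j : ℕ => f n (j + (M + 1))) :=
      fun n => (summable_nat_add_iff (M + 1)).2 (hSummF n)
    have hSdecomp : ∀ n : ℕ, (∑' m : ℕ, f n m)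
        = (∑ m ∈ Finset.range (M + 1), f n m) + ∑' j : ℕ, f n (j + (M + 1)) :=
      fun n => (Summable.sum_add_tsum_nat_add (M + 1) (hSummF n)).symm
    have hPdecomp : (∑' n : ℕ, s (n + 1) * ∑' m : ℕ, f (n + 1) m)
        = (∑ n ∈ Finset.range N, s (n + 1) * ∑' m : ℕ, f (n + 1) m)
          + ∑' k : ℕ, s (k + N + 1) * ∑' m : ℕ, f (k + N + 1) m := by
      rw [← Summable.sum_add_tsum_nat_add N hsum2]
    have hIcc : (∑ n ∈ Finset.Icc 1 N, s n * ∑ m ∈ Finset.range (M + 1), f n m)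
        = ∑ n ∈ Finset.range N, s (n + 1) * ∑ m ∈ Finset.range (M + 1), f (n + 1) m := by
      rw [← Finset.Ico_add_one_right_eq_Icc, Finset.sum_Ico_eq_sum_range]
      exact Finset.sum_congr (by norm_num) fun i _ => by rw [Nat.add_comm 1 i]
    have hdiff : c * (∑' n : ℕ, s (n + 1) * ∑' m : ℕ, f (n + 1) m) - phat N M
        = c * ((∑ n ∈ Finset.range N, s (n + 1) * ∑' j : ℕ, f (n + 1) (j + (M + 1)))
            + ∑' k : ℕ, s (k + N + 1) * ∑' m : ℕ, f (k + N + 1) m) := by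
      rw [hphat, hIcc, hPdecomp]
      have h5 : (∑ n ∈ Finset.range N, s (n + 1) * ∑' m : ℕ, f (n + 1) m)
          = ∑ n ∈ Finset.range N, (s (n + 1) * ∑ m ∈ Finset.range (M + 1), f (n + 1) m
              + s (n + 1) * ∑' j : ℕ, f (n + 1) (j + (M + 1))) :=
        Finset.sum_congr rfl fun n _ => by rw [hSdecomp (n + 1)]; ring
      rw [h5, Finset.sum_add_distrib]
      ring
    -- n-tail bound
    have habs_shift : Summable (fun k : ℕ => |s (k + N + 1) * ∑' m : ℕ, f (k + N + 1) m|) :=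
      (summable_nat_add_iff (f := fun n => |s (n + 1) * ∑' m : ℕ, f (n + 1) m|) N).2 hpart2
    have htailN : ∀ k : ℕ, |s (k + N + 1) * ∑' m : ℕ, f (k + N + 1) m| ≤
        (x ^ a) ^ (N + 1) / (((N + 1).factorial : ℝ)) * Real.exp (x ^ 2)
          * ((x ^ a) ^ k / (k.factorial : ℝ)) := by
      intro k
      rw [abs_mul, abs_of_nonneg (hS_nonneg (k + N + 1))]
      have h1 : |s (k + N + 1)| ≤ ((k + N + 1 : ℕ) : ℝ) := hs (k + N + 1) (by omega)
      have h2 := hS_le (k + N + 1)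
      have hfact : ((k + N + 1 : ℕ) : ℝ) * ((((N + 1).factorial : ℝ)) * (k.factorial : ℝ)) ≤
          Real.Gamma (((k + N + 1 : ℕ) : ℝ) * a + 1) := by
        have hnat : (k + N + 1) * ((N + 1).factorial * k.factorial) ≤ (k + N + 2).factorial := by
          calc (k + N + 1) * ((N + 1).factorial * k.factorial)
              ≤ (k + N + 1) * ((N + 1) + k).factorial :=
                Nat.mul_le_mul_left _ (ucas_fact_mul_fact_le _ _)
            _ = (k + N + 1) * (k + N + 1).factorial := by rw [show (N + 1) + k = k + N + 1 by omega]
            _ ≤ (k + N + 2) * (k + N + 1).factorial := Nat.mul_le_mul_right _ (by omega)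
            _ = (k + N + 2).factorial := (Nat.factorial_succ (k + N + 1)).symm
        calc ((k + N + 1 : ℕ) : ℝ) * ((((N + 1).factorial : ℝ)) * (k.factorial : ℝ))
            ≤ (((k + N + 2).factorial : ℝ)) := by exact_mod_cast hnat
          _ = ((((k + N + 1) + 1).factorial : ℝ)) := by norm_num
          _ ≤ Real.Gamma (((k + N + 1 : ℕ) : ℝ) * a + 1) := hG2 (k + N + 1) (by omega)
      have hkey : ((k + N + 1 : ℕ) : ℝ)
            * ((x ^ a) ^ (k + N + 1) / Real.Gamma (((k + N + 1 : ℕ) : ℝ) * a + 1)) ≤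
          (x ^ a) ^ (N + 1) / (((N + 1).factorial : ℝ)) * ((x ^ a) ^ k / (k.factorial : ℝ)) := by
        have hrhs : (x ^ a) ^ (N + 1) / (((N + 1).factorial : ℝ)) * ((x ^ a) ^ k / (k.factorial : ℝ))
            = (x ^ a) ^ (k + N + 1) / ((((N + 1).factorial : ℝ)) * (k.factorial : ℝ)) := by
          rw [div_mul_div_comm, ← pow_add, show N + 1 + k = k + N + 1 by omega]
        rw [hrhs]
        exact ucas_frac (by positivity) (by positivity) (hGpos' (k + N + 1)) hfact
      calc |s (k + N + 1)| * (∑' m : ℕ, f (k + N + 1) m)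
          ≤ ((k + N + 1 : ℕ) : ℝ) * ((x ^ a) ^ (k + N + 1)
              / Real.Gamma (((k + N + 1 : ℕ) : ℝ) * a + 1) * Real.exp (x ^ 2)) :=
            mul_le_mul h1 h2 (hS_nonneg _) (Nat.cast_nonneg _)
        _ = ((k + N + 1 : ℕ) : ℝ) * ((x ^ a) ^ (k + N + 1)
              / Real.Gamma (((k + N + 1 : ℕ) : ℝ) * a + 1)) * Real.exp (x ^ 2) := by ring
        _ ≤ (x ^ a) ^ (N + 1) / (((N + 1).factorial : ℝ)) * ((x ^ a) ^ k / (k.factorial : ℝ))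
              * Real.exp (x ^ 2) := mul_le_mul_of_nonneg_right hkey (Real.exp_nonneg _)
        _ = (x ^ a) ^ (N + 1) / (((N + 1).factorial : ℝ)) * Real.exp (x ^ 2)
              * ((x ^ a) ^ k / (k.factorial : ℝ)) := by ring
    have hTbound : (∑' k : ℕ, |s (k + N + 1) * ∑' m : ℕ, f (k + N + 1) m|) ≤
        (x ^ a) ^ (N + 1) / (((N + 1).factorial : ℝ)) * Real.exp (x ^ 2) * Real.exp (x ^ a) := by
      calc (∑' k : ℕ, |s (k + N + 1) * ∑' m : ℕ, f (k + N + 1) m|)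
          ≤ ∑' k : ℕ, (x ^ a) ^ (N + 1) / (((N + 1).factorial : ℝ)) * Real.exp (x ^ 2)
              * ((x ^ a) ^ k / (k.factorial : ℝ)) :=
            Summable.tsum_le_tsum htailN habs_shift ((hsummexp (x ^ a)).mul_left _)
        _ = (x ^ a) ^ (N + 1) / (((N + 1).factorial : ℝ)) * Real.exp (x ^ 2)
              * ∑' k : ℕ, (x ^ a) ^ k / (k.factorial : ℝ) := tsum_mul_left
        _ = _ := by rw [ucas_exp_tsum]
    -- m-tail bound
    have htailM : ∀ n j : ℕ, ((n + 1 : ℕ) : ℝ) * f (n + 1) (j + (M + 1)) ≤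
        (x ^ 2) ^ (M + 1) * x ^ a / (((M + 1).factorial : ℝ) * ((M + 2).factorial : ℝ))
          * ((x ^ 2) ^ j / (j.factorial : ℝ)) * ((x ^ a) ^ n / (n.factorial : ℝ)) := by
      intro n j
      rw [hf' (n + 1) (j + (M + 1))]
      have hrhs : (x ^ 2) ^ (M + 1) * x ^ a / (((M + 1).factorial : ℝ) * ((M + 2).factorial : ℝ))
            * ((x ^ 2) ^ j / (j.factorial : ℝ)) * ((x ^ a) ^ n / (n.factorial : ℝ))
          = (x ^ 2) ^ (j + (M + 1)) * (x ^ a) ^ (n + 1)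
            / ((((M + 1).factorial : ℝ) * ((M + 2).factorial : ℝ)) * (j.factorial : ℝ)
                * (n.factorial : ℝ)) := by
        rw [div_mul_div_comm, div_mul_div_comm]
        congr 1
        rw [pow_add, pow_succ]
        ring
      rw [hrhs]
      have hA0 : (M + 1).factorial * j.factorial ≤ (j + (M + 1)).factorial := by
        rw [Nat.add_comm j (M + 1)]; exact ucas_fact_mul_fact_le (M + 1) j
      have hA' : (((M + 1).factorial : ℝ)) * (j.factorial : ℝ) ≤ (((j + (M + 1)).factorial : ℝ)) := by
        exact_mod_cast hA0
      have hB' : (((M + 2).factorial : ℝ)) * (((n + 1).factorial : ℝ)) ≤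
          Real.Gamma (((j + (M + 1) : ℕ) : ℝ) + ((n + 1 : ℕ) : ℝ) * a + 1) := by
        have hnat : (M + 2).factorial * (n + 1).factorial ≤ (M + n + 2).factorial := by
          have := ucas_key2 M (n + 1) (by omega)
          simpa [show M + (n + 1) + 1 = M + n + 2 by omega] using this
        have hgam : (((M + n + 2).factorial : ℝ)) ≤
            Real.Gamma (((j + (M + 1) : ℕ) : ℝ) + ((n + 1 : ℕ) : ℝ) * a + 1) := by
          rw [← Real.Gamma_nat_eq_factorial (M + n + 2)]
          apply ucas_gamma_mono
          · push_cast; linarith [(Nat.cast_nonneg M : (0:ℝ) ≤ (M:ℝ)), (Nat.cast_nonneg n : (0:ℝ) ≤ (n:ℝ))]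
          · have hna : ((n + 1 : ℕ) : ℝ) * 1 ≤ ((n + 1 : ℕ) : ℝ) * a :=
              mul_le_mul_of_nonneg_left ha1 (Nat.cast_nonneg _)
            push_cast at hna ⊢
            linarith [(Nat.cast_nonneg j : (0:ℝ) ≤ (j:ℝ))]
        calc (((M + 2).factorial : ℝ)) * (((n + 1).factorial : ℝ))
            ≤ (((M + n + 2).factorial : ℝ)) := by exact_mod_cast hnat
          _ ≤ _ := hgam
      have hfact : ((n + 1 : ℕ) : ℝ) * ((((M + 1).factorial : ℝ) * ((M + 2).factorial : ℝ))
            * (j.factorial : ℝ) * (n.factorial : ℝ)) ≤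
          (((j + (M + 1)).factorial : ℝ))
            * Real.Gamma (((j + (M + 1) : ℕ) : ℝ) + ((n + 1 : ℕ) : ℝ) * a + 1) := by
        calc ((n + 1 : ℕ) : ℝ) * ((((M + 1).factorial : ℝ) * ((M + 2).factorial : ℝ))
              * (j.factorial : ℝ) * (n.factorial : ℝ))
            = ((((M + 1).factorial : ℝ)) * (j.factorial : ℝ))
              * ((((M + 2).factorial : ℝ)) * (((n + 1).factorial : ℝ))) := by
              push_cast [Nat.factorial_succ]; ring
          _ ≤ _ := mul_le_mul hA' hB' (by positivity) (Nat.cast_nonneg _)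
      exact ucas_frac (by positivity) (by positivity)
        (mul_pos (by positivity) (hGpos (n + 1) (j + (M + 1)))) hfact
    have hMrow : ∀ n : ℕ, |s (n + 1)| * (∑' j : ℕ, f (n + 1) (j + (M + 1))) ≤
        (x ^ 2) ^ (M + 1) * x ^ a / (((M + 1).factorial : ℝ) * ((M + 2).factorial : ℝ))
          * Real.exp (x ^ 2) * ((x ^ a) ^ n / (n.factorial : ℝ)) := by
      intro n
      have hR0 : 0 ≤ ∑' j : ℕ, f (n + 1) (j + (M + 1)) :=
        tsum_nonneg fun j => hfnn (n + 1) (j + (M + 1))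
      calc |s (n + 1)| * (∑' j : ℕ, f (n + 1) (j + (M + 1)))
          ≤ ((n + 1 : ℕ) : ℝ) * (∑' j : ℕ, f (n + 1) (j + (M + 1))) :=
            mul_le_mul_of_nonneg_right (hs (n + 1) (by omega)) hR0
        _ = ∑' j : ℕ, ((n + 1 : ℕ) : ℝ) * f (n + 1) (j + (M + 1)) := tsum_mul_left.symm
        _ ≤ ∑' j : ℕ, (x ^ 2) ^ (M + 1) * x ^ a
              / (((M + 1).factorial : ℝ) * ((M + 2).factorial : ℝ))
              * ((x ^ 2) ^ j / (j.factorial : ℝ)) * ((x ^ a) ^ n / (n.factorial : ℝ)) :=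
            Summable.tsum_le_tsum (htailM n) ((hSummTail (n + 1)).mul_left _)
              (((hsummexp (x ^ 2)).mul_left _).mul_right _)
        _ = (∑' j : ℕ, (x ^ 2) ^ (M + 1) * x ^ a
              / (((M + 1).factorial : ℝ) * ((M + 2).factorial : ℝ))
              * ((x ^ 2) ^ j / (j.factorial : ℝ))) * ((x ^ a) ^ n / (n.factorial : ℝ)) :=
            tsum_mul_right
        _ = (x ^ 2) ^ (M + 1) * x ^ a / (((M + 1).factorial : ℝ) * ((M + 2).factorial : ℝ))
              * (∑' j : ℕ, (x ^ 2) ^ j / (j.factorial : ℝ)) * ((x ^ a) ^ n / (n.factorial : ℝ)) := by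
            rw [tsum_mul_left]
        _ = _ := by rw [ucas_exp_tsum]
    have hMsum : (∑ n ∈ Finset.range N, |s (n + 1)| * ∑' j : ℕ, f (n + 1) (j + (M + 1)))
        ≤ (x ^ 2) ^ (M + 1) * x ^ a / (((M + 1).factorial : ℝ) * ((M + 2).factorial : ℝ))
          * Real.exp (x ^ 2) * Real.exp (x ^ a) := by
      have hpref : 0 ≤ (x ^ 2) ^ (M + 1) * x ^ a
          / (((M + 1).factorial : ℝ) * ((M + 2).factorial : ℝ)) * Real.exp (x ^ 2) := by
        apply mul_nonneg _ (Real.exp_nonneg _)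
        exact div_nonneg (mul_nonneg (pow_nonneg hX20 _) hXA0) (by positivity)
      calc (∑ n ∈ Finset.range N, |s (n + 1)| * ∑' j : ℕ, f (n + 1) (j + (M + 1)))
          ≤ ∑ n ∈ Finset.range N, (x ^ 2) ^ (M + 1) * x ^ a
              / (((M + 1).factorial : ℝ) * ((M + 2).factorial : ℝ))
              * Real.exp (x ^ 2) * ((x ^ a) ^ n / (n.factorial : ℝ)) :=
            Finset.sum_le_sum fun n _ => hMrow n
        _ = (x ^ 2) ^ (M + 1) * x ^ a / (((M + 1).factorial : ℝ) * ((M + 2).factorial : ℝ))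
              * Real.exp (x ^ 2) * ∑ n ∈ Finset.range N, ((x ^ a) ^ n / (n.factorial : ℝ)) := by
            rw [Finset.mul_sum]
        _ ≤ _ := mul_le_mul_of_nonneg_left (Real.sum_le_exp_of_nonneg hXA0 N) hpref
    -- combine
    have htri : |(∑ n ∈ Finset.range N, s (n + 1) * ∑' j : ℕ, f (n + 1) (j + (M + 1)))
          + ∑' k : ℕ, s (k + N + 1) * ∑' m : ℕ, f (k + N + 1) m|
        ≤ (∑ n ∈ Finset.range N, |s (n + 1)| * ∑' j : ℕ, f (n + 1) (j + (M + 1)))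
          + ∑' k : ℕ, |s (k + N + 1) * ∑' m : ℕ, f (k + N + 1) m| := by
      refine (abs_add_le _ _).trans (add_le_add ?_ ?_)
      · refine (Finset.abs_sum_le_sum_abs _ _).trans (Finset.sum_le_sum fun n _ => ?_)
        exact le_of_eq (by
          rw [abs_mul, abs_of_nonneg (tsum_nonneg fun j => hfnn (n + 1) (j + (M + 1)))])
      · have h6 : Summable (fun k : ℕ => ‖s (k + N + 1) * ∑' m : ℕ, f (k + N + 1) m‖) := by
          simpa only [Real.norm_eq_abs] using habs_shift
        simpa only [Real.norm_eq_abs] using norm_tsum_le_tsum_norm h6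
    rw [hdiff, heps, abs_mul, abs_of_nonneg hc]
    calc c * |(∑ n ∈ Finset.range N, s (n + 1) * ∑' j : ℕ, f (n + 1) (j + (M + 1)))
          + ∑' k : ℕ, s (k + N + 1) * ∑' m : ℕ, f (k + N + 1) m|
        ≤ c * (((x ^ 2) ^ (M + 1) * x ^ a / (((M + 1).factorial : ℝ) * ((M + 2).factorial : ℝ))
            * Real.exp (x ^ 2) * Real.exp (x ^ a))
          + ((x ^ a) ^ (N + 1) / (((N + 1).factorial : ℝ)) * Real.exp (x ^ 2)
            * Real.exp (x ^ a))) :=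
          mul_le_mul_of_nonneg_left (htri.trans (add_le_add hMsum hTbound)) hc
      _ = _ := by
          rw [hAcgen N, hBcgen M, Real.exp_add]
          ring
  -- Part 4
  have htendA : Tendsto (fun N : ℕ => x ^ (3 * (N : ℝ) / (Υ : ℝ) + a)
      / ((Nat.factorial (N + 1) : ℝ))) atTop (nhds 0) := by
    have h1 : Tendsto (fun n : ℕ => (x ^ a) ^ n / (n.factorial : ℝ)) atTop (nhds 0) :=
      (hsummexp (x ^ a)).tendsto_atTop_zero
    have h2 := h1.comp (tendsto_add_atTop_nat 1)
    refine h2.congr fun N => ?_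
    simp only [Function.comp]
    rw [hAcgen N]
  have htendB : Tendsto (fun M : ℕ => x ^ (2 * (M : ℝ) + 2 + a)
      / ((Nat.factorial (M + 1) : ℝ) * (Nat.factorial (M + 2) : ℝ))) atTop (nhds 0) := by
    have h1 : Tendsto (fun n : ℕ => x ^ a * ((x ^ 2) ^ n / (n.factorial : ℝ))) atTop (nhds 0) := by
      have h0 := ((hsummexp (x ^ 2)).tendsto_atTop_zero).const_mul (x ^ a)
      simpa using h0
    have h2 := h1.comp (tendsto_add_atTop_nat 1)
    apply tendsto_of_tendsto_of_tendsto_of_le_of_le tendsto_const_nhds h2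
    · intro M
      exact div_nonneg (Real.rpow_nonneg hx _) (by positivity)
    · intro M
      simp only [Function.comp]
      rw [hBcgen M, show x ^ a * ((x ^ 2) ^ (M + 1) / ((Nat.factorial (M + 1) : ℝ)))
        = x ^ a * (x ^ 2) ^ (M + 1) / ((Nat.factorial (M + 1) : ℝ)) by ring]
      apply div_le_div₀ (mul_nonneg hXA0 (pow_nonneg hX20 _)) (le_of_eq (by ring))
        (by positivity)
      have h7 : (1 : ℝ) ≤ ((M + 2).factorial : ℝ) := by
        exact_mod_cast Nat.one_le_iff_ne_zero.mpr (M + 2).factorial_ne_zero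
      nlinarith [show (0:ℝ) < ((M + 1).factorial : ℝ) by positivity]
  have hpart4 : Tendsto (fun NM : ℕ × ℕ => eps NM.1 NM.2) atTop (nhds 0) := by
    have heq4 : (fun NM : ℕ × ℕ => eps NM.1 NM.2) = fun NM : ℕ × ℕ =>
        c * Real.exp (x ^ a + x ^ 2)
          * (x ^ (3 * (NM.1 : ℝ) / (Υ : ℝ) + a) / ((Nat.factorial (NM.1 + 1) : ℝ)))
        + c * Real.exp (x ^ a + x ^ 2)
          * (x ^ (2 * (NM.2 : ℝ) + 2 + a)
            / ((Nat.factorial (NM.2 + 1) : ℝ) * (Nat.factorial (NM.2 + 2) : ℝ))) := by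
      funext NM
      rw [heps]
      ring
    rw [heq4]
    have hfst : Tendsto (Prod.fst : ℕ × ℕ → ℕ) atTop atTop := by
      rw [← Filter.prod_atTop_atTop_eq]; exact tendsto_fst
    have hsnd : Tendsto (Prod.snd : ℕ × ℕ → ℕ) atTop atTop := by
      rw [← Filter.prod_atTop_atTop_eq]; exact tendsto_snd
    have h5 := ((htendA.comp hfst).const_mul (c * Real.exp (x ^ a + x ^ 2))).add
      ((htendB.comp hsnd).const_mul (c * Real.exp (x ^ a + x ^ 2)))
    simpa [Function.comp] using h5
  exact ⟨fun n _ => hSummF n, hpart2, hpart3, hpart4⟩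
end

section
/- Let v > 0 and define φ : ℝ → ℝ by φ(x) = (v+1)(−2v + x²(v+3)) / (8(v + x²)²). Then for all x ∈ ℝ, φ(x) ≤ (v+1)(v+3)² / (32(v² + 5v)), with equality if and only if x² = (7v + v²)/(v + 3), i.e. x = ±√((7v + v²)/(v + 3)). -/
theorem phi_upper_bound_langevin_t
    (v : ℝ) (hv : 0 < v)
    (φ : ℝ → ℝ)
    (hφ : ∀ x, φ x = (v + 1) * (-2 * v + x ^ 2 * (v + 3)) / (8 * (v + x ^ 2) ^ 2)) :
    ∀ x : ℝ, φ x ≤ (v + 1) * (v + 3) ^ 2 / (32 * (v ^ 2 + 5 * v)) ∧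
      (φ x = (v + 1) * (v + 3) ^ 2 / (32 * (v ^ 2 + 5 * v)) ↔
        x ^ 2 = (7 * v + v ^ 2) / (v + 3)) := by
  intro x
  have hx2 : (0:ℝ) ≤ x ^ 2 := sq_nonneg x
  have hd1 : (0:ℝ) < 8 * (v + x ^ 2) ^ 2 := by positivity
  have hd2 : (0:ℝ) < 32 * (v ^ 2 + 5 * v) := by nlinarith
  have hv3 : (0:ℝ) < v + 3 := by linarith
  have key : (v + 1) * (-2 * v + x ^ 2 * (v + 3)) * (32 * (v ^ 2 + 5 * v)) ≤
      (v + 1) * (v + 3) ^ 2 * (8 * (v + x ^ 2) ^ 2) := by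
    nlinarith [sq_nonneg ((v + 3) * x ^ 2 - v * (v + 7)), mul_nonneg (le_of_lt hv) (sq_nonneg ((v + 3) * x ^ 2 - v * (v + 7)))]
  constructor
  · rw [hφ]
    rw [div_le_div_iff₀ hd1 hd2]
    linarith
  · rw [hφ]
    rw [div_eq_div_iff (ne_of_gt hd1) (ne_of_gt hd2)]
    constructor
    · intro h
      have h2 : (v + 1) * ((v + 3) * x ^ 2 - v * (v + 7)) ^ 2 = 0 := by nlinarith
      have h3 : ((v + 3) * x ^ 2 - v * (v + 7)) ^ 2 = 0 := by
        have : (0:ℝ) < v + 1 := by linarith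
        exact by nlinarith [sq_nonneg ((v + 3) * x ^ 2 - v * (v + 7))]
      have h4 : (v + 3) * x ^ 2 - v * (v + 7) = 0 := by
        exact pow_eq_zero_iff (by norm_num) |>.mp h3
      field_simp
      linarith
    · intro h
      have h4 : (v + 3) * x ^ 2 = 7 * v + v ^ 2 := by
        field_simp at h
        linarith
      rw [h]
      have hne : v + 3 ≠ 0 := by linarith
      field_simp
      ring
end

section
/- Let v > 0 and define φ : ℝ → ℝ by φ(x) = (v+1)(−2v + x²(v+3)) / (8(v + x²)²). Then for all x ∈ ℝ, φ(x) ≥ −(v+1)/(4v), with equality if and only if x = 0. -/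
theorem phi_lower_bound_langevin_t
    (v : ℝ) (hv : 0 < v)
    (φ : ℝ → ℝ)
    (hφ : ∀ x, φ x = (v + 1) * (-2 * v + x ^ 2 * (v + 3)) / (8 * (v + x ^ 2) ^ 2)) :
    ∀ x : ℝ, -(v + 1) / (4 * v) ≤ φ x ∧ (φ x = -(v + 1) / (4 * v) ↔ x = 0) := by
  intro x
  have hd : (0:ℝ) < 8 * (v + x ^ 2) ^ 2 := by positivity
  have hd2 : (0:ℝ) < 4 * v := by positivity
  rw [hφ]
  refine ⟨?_, ?_, ?_⟩
  · rw [div_le_div_iff₀ hd2 hd]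
    nlinarith [sq_nonneg x, sq_nonneg (x^2), sq_nonneg (x*v), hv.le]
  · intro h
    rw [div_eq_div_iff hd.ne' hd2.ne'] at h
    have hx2 : x ^ 2 = 0 := by nlinarith [sq_nonneg x, sq_nonneg (x^2), mul_pos hv hv, sq_nonneg (x*v), sq_nonneg (x^2*v)]
    exact pow_eq_zero_iff (two_ne_zero) |>.mp hx2
  · intro h
    subst h
    field_simp
    ring
end
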